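/- arXiv:1904.02423 — 4 statements merged into one kernel-verified Lean document; each statement's English description precedes it below -/
import Mathlib

section
/- Uniform positive lower bound on a Hölder-continuous function with an integrable negative power (Healey–Krömer-type estimate): Let d ≥ 1, c > 0, α ∈ (0,1], L > 0, M > 0 and q > d/α. Then there exists ε > 0, depending only on d, c, α, L, M and q, with the following property: for every nonempty bounded open set Ω ⊆ ℝ^d satisfying the measure-density condition vol(Ω ∩ B(x,r)) ≥ c·r^d for all x ∈ Ω and all r ∈ (0,1], and every function f : Ω → ℝ with f(x) > 0 for all x ∈ Ω, |f(x) − f(x′)| ≤ L·|x − x′|^α for all x, x′ ∈ Ω, and ∫_Ω f(x)^{−q} dx ≤ M, one has f(x) ≥ ε for all x ∈ Ω. -/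
open MeasureTheory

/-- Uniform positive lower bound on a Hölder-continuous function with an integrable
negative power (Healey–Krömer-type estimate): given `d ≥ 1`, `c > 0`, `α ∈ (0,1]`,
`L > 0`, `M > 0` and `q > d/α`, there is `ε > 0`, depending only on these constants,
such that for every nonempty bounded open `Ω ⊆ ℝ^d` with the measure-density property
`vol(Ω ∩ B(x,r)) ≥ c rᵈ` (for `x ∈ Ω`, `0 < r ≤ 1`) and every positive function
`f : Ω → ℝ` that is `α`-Hölder with constant `L` and satisfies `∫_Ω f^{-q} ≤ M`,
one has `f ≥ ε` on `Ω`. -/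
theorem healey_kroemer_uniform_lower_bound
    (d : ℕ) (hd : 1 ≤ d) (c α L M q : ℝ)
    (hc : 0 < c) (hα : 0 < α ∧ α ≤ 1) (hL : 0 < L) (hM : 0 < M)
    (hq : (d : ℝ) / α < q) :
    ∃ ε : ℝ, 0 < ε ∧
      ∀ Ω : Set (EuclideanSpace ℝ (Fin d)),
        Ω.Nonempty → IsOpen Ω → Bornology.IsBounded Ω →
        (∀ x ∈ Ω, ∀ r : ℝ, 0 < r → r ≤ 1 →
          c * r ^ d ≤ (volume (Ω ∩ Metric.ball x r)).toReal) →
        ∀ f : EuclideanSpace ℝ (Fin d) → ℝ,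
          (∀ x ∈ Ω, 0 < f x) →
          (∀ x ∈ Ω, ∀ x' ∈ Ω, |f x - f x'| ≤ L * dist x x' ^ α) →
          (∫⁻ x in Ω, ENNReal.ofReal (f x ^ (-q)) ≤ ENNReal.ofReal M) →
          ∀ x ∈ Ω, ε ≤ f x := by
  obtain ⟨hα0, hα1⟩ := hα
  have hd0 : (0 : ℝ) < d := by exact_mod_cast Nat.lt_of_lt_of_le Nat.zero_lt_one hd
  set β : ℝ := (d : ℝ) / α with hβdef
  have hβ0 : 0 < β := div_pos hd0 hα0
  have hs0 : 0 < q - β := sub_pos.mpr hq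
  have hq0 : 0 < q := lt_trans hβ0 hq
  set A : ℝ := (2 : ℝ) ^ q with hAdef
  set B : ℝ := L ^ β with hBdef
  have hA0 : 0 < A := Real.rpow_pos_of_pos two_pos q
  have hB0 : 0 < B := Real.rpow_pos_of_pos hL β
  set K : ℝ := c / (M * A * B) with hKdef
  have hK0 : 0 < K := div_pos hc (by positivity)
  set ε₀ : ℝ := K ^ (1 / (q - β)) with hε₀def
  have hε₀0 : 0 < ε₀ := Real.rpow_pos_of_pos hK0 _
  refine ⟨min L ε₀, lt_min hL hε₀0, ?_⟩
  intro Ω hne hopen hbdd hdens f hfpos hHold hint x hx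
  by_contra hcon
  push_neg at hcon
  set m : ℝ := f x with hmdef
  have hm0 : 0 < m := hfpos x hx
  have hmL : m < L := lt_of_lt_of_le hcon (min_le_left _ _)
  have hmε₀ : m < ε₀ := lt_of_lt_of_le hcon (min_le_right _ _)
  set r : ℝ := (m / L) ^ (1 / α) with hrdef
  have hmL0 : 0 < m / L := div_pos hm0 hL
  have hr0 : 0 < r := Real.rpow_pos_of_pos hmL0 _
  have hr1 : r ≤ 1 :=
    Real.rpow_le_one hmL0.le (le_of_lt ((div_lt_one hL).mpr hmL)) (by positivity)
  have hrα : r ^ α = m / L := by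
    rw [hrdef, ← Real.rpow_mul hmL0.le, one_div_mul_cancel hα0.ne', Real.rpow_one]
  have hrd : r ^ d = (m / L) ^ β := by
    rw [← Real.rpow_natCast r d, hrdef, ← Real.rpow_mul hmL0.le]
    congr 1
    field_simp [hβdef]
    rw [hβdef, mul_div_assoc', mul_comm, mul_div_assoc, div_self hα0.ne', mul_one]
  -- On Ω ∩ B(x, r), f ≤ 2 m
  have hupper : ∀ y ∈ Ω ∩ Metric.ball x r, f y ≤ 2 * m := by
    intro y hy
    have h1 : |f y - f x| ≤ L * dist y x ^ α := hHold y hy.1 x hx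
    have h2 : dist y x ^ α ≤ r ^ α :=
      Real.rpow_le_rpow dist_nonneg (le_of_lt hy.2) hα0.le
    have h3 : L * dist y x ^ α ≤ m := by
      calc L * dist y x ^ α ≤ L * r ^ α := by nlinarith
        _ = m := by rw [hrα]; field_simp
    have := abs_le.mp h1
    linarith [this.1, this.2]
  -- integral lower bound
  have hmeas : MeasurableSet (Ω ∩ Metric.ball x r) :=
    (hopen.inter Metric.isOpen_ball).measurableSet
  have hstep1 : ENNReal.ofReal ((2 * m) ^ (-q)) * volume (Ω ∩ Metric.ball x r)
      ≤ ∫⁻ y in Ω ∩ Metric.ball x r, ENNReal.ofReal (f y ^ (-q)) := by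
    rw [← setLIntegral_const (Ω ∩ Metric.ball x r) (ENNReal.ofReal ((2 * m) ^ (-q)))]
    refine setLIntegral_mono' hmeas ?_
    intro y hy
    exact ENNReal.ofReal_le_ofReal
      (Real.rpow_le_rpow_of_nonpos (hfpos y hy.1) (hupper y hy) (by linarith))
  have hstep2 : (∫⁻ y in Ω ∩ Metric.ball x r, ENNReal.ofReal (f y ^ (-q)))
      ≤ ENNReal.ofReal M :=
    le_trans (lintegral_mono_set Set.inter_subset_left) hint
  have hvol : ENNReal.ofReal (c * r ^ d) ≤ volume (Ω ∩ Metric.ball x r) :=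
    le_trans (ENNReal.ofReal_le_ofReal (hdens x hx r hr0 hr1)) ENNReal.ofReal_toReal_le
  have hchain : ENNReal.ofReal ((2 * m) ^ (-q) * (c * r ^ d)) ≤ ENNReal.ofReal M := by
    rw [ENNReal.ofReal_mul (by positivity)]
    exact le_trans (mul_le_mul_right hvol _) (le_trans hstep1 hstep2)
  have hreal : (2 * m) ^ (-q) * (c * r ^ d) ≤ M :=
    (ENNReal.ofReal_le_ofReal_iff hM.le).mp hchain
  -- algebra
  have h2m : (2 * m) ^ (-q) = A⁻¹ * m ^ (-q) := by
    rw [Real.mul_rpow (by norm_num : (0:ℝ) ≤ 2) hm0.le, hAdef,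
      Real.rpow_neg (by norm_num : (0:ℝ) ≤ 2)]
  have hms : m ^ (-q) * m ^ β = (m ^ (q - β))⁻¹ := by
    rw [← Real.rpow_add hm0, ← Real.rpow_neg hm0.le]
    congr 1
    ring
  set t : ℝ := m ^ (q - β) with htdef
  have ht0 : 0 < t := Real.rpow_pos_of_pos hm0 _
  have hmb0 : 0 < m ^ β := Real.rpow_pos_of_pos hm0 β
  have hmq : m ^ (-q) = t⁻¹ / m ^ β := by
    rw [htdef, ← Real.rpow_neg hm0.le, ← Real.rpow_sub hm0]
    congr 1
    ring
  have hkey : c / (A * t * B) ≤ M := by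
    have hdiv : (m / L) ^ β = m ^ β / B := Real.div_rpow hm0.le hL.le β
    calc c / (A * t * B) = (2 * m) ^ (-q) * (c * r ^ d) := by
          rw [h2m, hrd, hdiv, hmq]
          field_simp
      _ ≤ M := hreal
  have hKt : K ≤ t := by
    rw [hKdef, div_le_iff₀ (by positivity)]
    rw [div_le_iff₀ (by positivity)] at hkey
    nlinarith [hkey]
  have hlt : t < K := by
    have := Real.rpow_lt_rpow hm0.le hmε₀ hs0
    rwa [hε₀def, ← Real.rpow_mul hK0.le, one_div_mul_cancel hs0.ne', Real.rpow_one] at this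
  exact absurd hKt (not_le.mpr hlt)
end

section
/- Ciarlet–Nečas condition implies almost-everywhere injectivity: Let d ≥ 1, let Ω ⊆ ℝ^d be a nonempty bounded open set, let U ⊇ closure(Ω) be open, and let y : ℝ^d → ℝ^d be continuously differentiable on U with det Dy(x) > 0 for every x ∈ Ω. If ∫_Ω det Dy(x) dx ≤ vol(y(Ω)), then y is injective almost everywhere on Ω: there exists a measurable set N ⊆ Ω with vol(N) = 0 such that y restricted to Ω \ N is injective. -/
open MeasureTheory

open Set ENNReal in

lemma cn_pairwise_null {α : Type*} [MeasurableSpace α] {μ : Measure α} {A : ℕ → Set α}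
    (hA : ∀ n, NullMeasurableSet (A n) μ) (hfin : μ (⋃ n, A n) ≠ ⊤)
    (hsum : ∑' n, μ (A n) ≤ μ (⋃ n, A n)) {i j : ℕ} (hij : i ≠ j) :
    μ (A i ∩ A j) = 0 := by
  set B : ℕ → Set α := fun k => if k = i ∨ k = j then ∅ else A k with hB
  have hBle : ∀ k, μ (B k) = if k = i ∨ k = j then 0 else μ (A k) := by
    intro k; by_cases h : k = i ∨ k = j <;> simp [hB, h]
  have hcover : (⋃ n, A n) ⊆ (A i ∪ A j) ∪ ⋃ k, B k := by
    intro x hx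
    obtain ⟨k, hk⟩ := mem_iUnion.1 hx
    by_cases h : k = i ∨ k = j
    · rcases h with h | h <;> subst h
      · exact Or.inl (Or.inl hk)
      · exact Or.inl (Or.inr hk)
    · exact Or.inr (mem_iUnion.2 ⟨k, by simp [hB, h, hk]⟩)
  have h1 : μ (⋃ n, A n) ≤ μ (A i ∪ A j) + ∑' k, μ (B k) :=
    (measure_mono hcover).trans ((measure_union_le _ _).trans
      (add_le_add le_rfl (measure_iUnion_le _)))
  have h2 : μ (A i ∪ A j) + μ (A i ∩ A j) = μ (A i) + μ (A j) :=
    measure_union_add_inter₀ (A i) (hA j)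
  have h3 : ∑' k, μ (A k) = μ (A i) + μ (A j) + ∑' k, μ (B k) := by
    have hji : ¬ (j = i) := fun h => hij h.symm
    rw [ENNReal.tsum_eq_add_tsum_ite i, ENNReal.tsum_eq_add_tsum_ite j, if_neg hji, ← add_assoc]
    congr 1
    apply tsum_congr
    intro k
    rw [hBle k]
    by_cases hkj : k = j
    · simp [hkj]
    · by_cases hki : k = i <;> simp [hki, hkj]
  have key : μ (⋃ n, A n) + μ (A i ∩ A j) ≤ μ (⋃ n, A n) + 0 := by
    calc μ (⋃ n, A n) + μ (A i ∩ A j)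
        ≤ (μ (A i ∪ A j) + ∑' k, μ (B k)) + μ (A i ∩ A j) := add_le_add h1 le_rfl
      _ = (μ (A i ∪ A j) + μ (A i ∩ A j)) + ∑' k, μ (B k) := by ring
      _ = (μ (A i) + μ (A j)) + ∑' k, μ (B k) := by rw [h2]
      _ = ∑' k, μ (A k) := by rw [h3]
      _ ≤ μ (⋃ n, A n) := hsum
      _ = μ (⋃ n, A n) + 0 := by rw [add_zero]
  exact le_antisymm ((ENNReal.add_le_add_iff_left hfin).1 key) (by positivity)


/-- Ciarlet–Nečas condition implies almost-everywhere injectivity: if `y` is `C¹` on an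
open neighbourhood `U` of `closure Ω`, with `det Dy > 0` on the nonempty bounded open
set `Ω`, and `∫_Ω det Dy ≤ vol (y(Ω))`, then `y` is injective off a null subset of `Ω`. -/
theorem ciarlet_necas_ae_injective
    (d : ℕ) (hd : 1 ≤ d)
    (Ω U : Set (EuclideanSpace ℝ (Fin d)))
    (hΩne : Ω.Nonempty) (hΩo : IsOpen Ω) (hΩb : Bornology.IsBounded Ω)
    (hUo : IsOpen U) (hU : closure Ω ⊆ U)
    (y : EuclideanSpace ℝ (Fin d) → EuclideanSpace ℝ (Fin d))
    (hy : ContDiffOn ℝ 1 y U)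
    (hdet : ∀ x ∈ Ω, 0 < (fderiv ℝ y x).det)
    (hCN : ∫ x in Ω, (fderiv ℝ y x).det ≤ (volume (y '' Ω)).toReal) :
    ∃ N : Set (EuclideanSpace ℝ (Fin d)),
      N ⊆ Ω ∧ MeasurableSet N ∧ volume N = 0 ∧ Set.InjOn y (Ω \ N) := by
  have hΩU : Ω ⊆ U := subset_closure.trans hU
  have hcdAt : ∀ x ∈ Ω, ContDiffAt ℝ 1 y x := fun x hx =>
    hy.contDiffAt (hUo.mem_nhds (hΩU hx))
  have hdiff : ∀ x ∈ Ω, HasFDerivAt y (fderiv ℝ y x) x := fun x hx =>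
    ((hcdAt x hx).differentiableAt one_ne_zero).hasFDerivAt
  -- the closure of Ω is compact and the image of the closure is compact
  have hclK : IsCompact (closure Ω) := hΩb.isCompact_closure
  have hycont : ContinuousOn y U := hy.continuousOn
  have himK : IsCompact (y '' closure Ω) := hclK.image_of_continuousOn (hycont.mono hU)
  have hfinIm : volume (y '' Ω) ≠ ⊤ :=
    ((measure_mono (Set.image_mono (f := y) subset_closure)).trans_lt himK.measure_lt_top).ne
  -- local injectivity from the inverse function theorem
  have hloc : ∀ x : EuclideanSpace ℝ (Fin d), x ∈ Ω → ∃ V : Set (EuclideanSpace ℝ (Fin d)), IsOpen V ∧ x ∈ V ∧ V ⊆ Ω ∧ Set.InjOn y V := by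
    intro x hx
    have hdx : (fderiv ℝ y x).det ≠ 0 := ne_of_gt (hdet x hx)
    set e := (fderiv ℝ y x).toContinuousLinearEquivOfDetNeZero hdx with he
    have hce : (e : EuclideanSpace ℝ (Fin d) →L[ℝ] EuclideanSpace ℝ (Fin d)) = fderiv ℝ y x :=
      ContinuousLinearMap.coe_toContinuousLinearEquivOfDetNeZero (fderiv ℝ y x) hdx
    have hsf : HasStrictFDerivAt y (e : EuclideanSpace ℝ (Fin d) →L[ℝ] EuclideanSpace ℝ (Fin d)) x := by
      rw [hce]; exact (hcdAt x hx).hasStrictFDerivAt one_ne_zero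
    refine ⟨(HasStrictFDerivAt.toOpenPartialHomeomorph y hsf).source ∩ Ω,
      (HasStrictFDerivAt.toOpenPartialHomeomorph y hsf).open_source.inter hΩo,
      ⟨HasStrictFDerivAt.mem_toOpenPartialHomeomorph_source hsf, hx⟩, Set.inter_subset_right, ?_⟩
    have := (HasStrictFDerivAt.toOpenPartialHomeomorph y hsf).injOn
    rw [HasStrictFDerivAt.toOpenPartialHomeomorph_coe hsf] at this
    exact this.mono Set.inter_subset_left
  -- countable cover by injectivity neighbourhoods
  have hloc' : ∀ x : Ω, ∃ V : Set (EuclideanSpace ℝ (Fin d)), IsOpen V ∧ (x : EuclideanSpace ℝ (Fin d)) ∈ V ∧ V ⊆ Ω ∧ Set.InjOn y V :=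
    fun x => hloc x x.2
  choose V hVo hxV hVΩ hVinj using hloc'
  obtain ⟨T, hTc, hTU⟩ := TopologicalSpace.isOpen_iUnion_countable V hVo
  have hTne : T.Nonempty := by
    rcases hΩne with ⟨x, hx⟩
    by_contra h
    rw [Set.not_nonempty_iff_eq_empty] at h
    have : x ∈ ⋃ i, V i := Set.mem_iUnion.2 ⟨⟨x, hx⟩, hxV ⟨x, hx⟩⟩
    rw [← hTU, h] at this
    simp at this
  obtain ⟨f, hf⟩ := hTc.exists_eq_range hTne
  set W : ℕ → Set (EuclideanSpace ℝ (Fin d)) := fun n => V (f n) with hW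
  have hWU : ⋃ n, W n = Ω := by
    have h1 : ⋃ n, W n = ⋃ i ∈ T, V i := by
      rw [hf, Set.biUnion_range]
    rw [h1, hTU]
    apply Set.Subset.antisymm
    · exact Set.iUnion_subset fun i => hVΩ i
    · intro x hx
      exact Set.mem_iUnion.2 ⟨⟨x, hx⟩, hxV ⟨x, hx⟩⟩
  -- disjointify
  set S : ℕ → Set (EuclideanSpace ℝ (Fin d)) := disjointed W with hS
  have hSsub : ∀ n, S n ⊆ W n := fun n => disjointed_subset W n
  have hSΩ : ∀ n, S n ⊆ Ω := fun n => (hSsub n).trans (hVΩ (f n))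
  have hSmeas : ∀ n, MeasurableSet (S n) :=
    MeasurableSet.disjointed fun n => (hVo (f n)).measurableSet
  have hSdisj : Pairwise (Function.onFun Disjoint S) := disjoint_disjointed W
  have hSU : ⋃ n, S n = Ω := by rw [hS, iUnion_disjointed, hWU]
  have hSinj : ∀ n, Set.InjOn y (S n) := fun n => (hVinj (f n)).mono (hSsub n)
  have hSderiv : ∀ n, ∀ x ∈ S n, HasFDerivWithinAt y (fderiv ℝ y x) (S n) x :=
    fun n x hx => (hdiff x (hSΩ n hx)).hasFDerivWithinAt
  -- change of variables on each piece
  have keyn : ∀ n, (∫⁻ x in S n, ENNReal.ofReal |(fderiv ℝ y x).det| ∂volume)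
      = volume (y '' S n) := fun n =>
    lintegral_abs_det_fderiv_eq_addHaar_image volume (hSmeas n) (hSderiv n) (hSinj n)
  have hAmeas : ∀ n, MeasurableSet (y '' S n) := fun n =>
    measurable_image_of_fderivWithin (hSmeas n) (hSderiv n) (hSinj n)
  -- total integral over Ω
  have hsplit : (∫⁻ x in Ω, ENNReal.ofReal |(fderiv ℝ y x).det| ∂volume)
      = ∑' n, volume (y '' S n) := by
    rw [← hSU, lintegral_iUnion hSmeas hSdisj]
    exact tsum_congr keyn
  -- integrability of the Jacobian
  have hdetcont : ContinuousOn (fun x => (fderiv ℝ y x).det) U :=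
    ContinuousLinearMap.continuous_det.comp_continuousOn
      (hy.continuousOn_fderiv_of_isOpen hUo le_rfl)
  have hInt : IntegrableOn (fun x => (fderiv ℝ y x).det) Ω volume :=
    ((hdetcont.mono hU).integrableOn_compact hclK).mono_set subset_closure
  -- ∫⁻ over Ω equals ofReal of the Bochner integral
  have habs : ∀ x ∈ Ω, ENNReal.ofReal |(fderiv ℝ y x).det| = ENNReal.ofReal (fderiv ℝ y x).det :=
    fun x hx => by rw [abs_of_pos (hdet x hx)]
  have hlint_eq : (∫⁻ x in Ω, ENNReal.ofReal |(fderiv ℝ y x).det| ∂volume)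
      = ENNReal.ofReal (∫ x in Ω, (fderiv ℝ y x).det) := by
    rw [setLIntegral_congr_fun hΩo.measurableSet
      habs]
    rw [← ofReal_integral_eq_lintegral_ofReal hInt]
    exact (ae_restrict_iff' hΩo.measurableSet).2
      (Filter.Eventually.of_forall fun x hx => (hdet x hx).le)
  -- the Ciarlet–Nečas inequality in ℝ≥0∞
  have hCN' : (∫⁻ x in Ω, ENNReal.ofReal |(fderiv ℝ y x).det| ∂volume) ≤ volume (y '' Ω) := by
    rw [hlint_eq]
    calc ENNReal.ofReal (∫ x in Ω, (fderiv ℝ y x).det)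
        ≤ ENNReal.ofReal ((volume (y '' Ω)).toReal) := ENNReal.ofReal_le_ofReal hCN
      _ = volume (y '' Ω) := ENNReal.ofReal_toReal hfinIm
  have himU : y '' Ω = ⋃ n, y '' S n := by rw [← hSU, Set.image_iUnion]
  have hsum_le : ∑' n, volume (y '' S n) ≤ volume (⋃ n, y '' S n) := by
    rw [← himU]
    exact hsplit ▸ hCN'
  have hfinU : volume (⋃ n, y '' S n) ≠ ⊤ := by rw [← himU]; exact hfinIm
  -- pairwise a.e. disjoint images
  have hpair : ∀ i j : ℕ, i ≠ j → volume (y '' S i ∩ y '' S j) = 0 := fun i j hij =>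
    cn_pairwise_null (fun n => (hAmeas n).nullMeasurableSet) hfinU hsum_le hij
  -- bad sets
  set Tm : ℕ → ℕ → Set (EuclideanSpace ℝ (Fin d)) := fun i j => toMeasurable volume (y '' S i ∩ y '' S j) with hTm
  have hTmnull : ∀ i j, i ≠ j → volume (Tm i j) = 0 := fun i j hij => by
    rw [hTm]; rw [measure_toMeasurable]; exact hpair i j hij
  set Bad : ℕ → ℕ → Set (EuclideanSpace ℝ (Fin d)) := fun i j => S i ∩ y ⁻¹' (Tm i j) with hBad
  have hBadmeas : ∀ i j, MeasurableSet (Bad i j) := by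
    intro i j
    have hemb : MeasurableEmbedding ((S i).restrict y) :=
      measurableEmbedding_of_fderivWithin (hSmeas i) (hSderiv i) (hSinj i)
    have : Bad i j = Subtype.val '' (((S i).restrict y) ⁻¹' (Tm i j)) := by
      ext x
      simp only [hBad, Set.mem_inter_iff, Set.mem_preimage, Set.mem_image, Set.restrict_apply]
      constructor
      · rintro ⟨hx, hy'⟩; exact ⟨⟨x, hx⟩, hy', rfl⟩
      · rintro ⟨⟨x', hx'⟩, hy', rfl⟩; exact ⟨hx', hy'⟩
    rw [this]
    exact (MeasurableEmbedding.subtype_coe (hSmeas i)).measurableSet_image.2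
      (hemb.measurable (measurableSet_toMeasurable _ _))
  have hgmeas : Measurable fun x => ENNReal.ofReal |(fderiv ℝ y x).det| :=
    ENNReal.measurable_ofReal.comp
      ((continuous_abs.comp ContinuousLinearMap.continuous_det).measurable.comp
        (measurable_fderiv ℝ y))
  have hBadnull : ∀ i j, i ≠ j → volume (Bad i j) = 0 := by
    intro i j hij
    have hsub : Bad i j ⊆ S i := Set.inter_subset_left
    have hder : ∀ x ∈ Bad i j, HasFDerivWithinAt y (fderiv ℝ y x) (Bad i j) x :=
      fun x hx => (hdiff x (hSΩ i (hsub hx))).hasFDerivWithinAt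
    have him : y '' Bad i j ⊆ Tm i j := by
      rintro _ ⟨x, hx, rfl⟩; exact hx.2
    have heq : (∫⁻ x in Bad i j, ENNReal.ofReal |(fderiv ℝ y x).det| ∂volume)
        = volume (y '' Bad i j) :=
      lintegral_abs_det_fderiv_eq_addHaar_image volume (hBadmeas i j) hder
        ((hSinj i).mono hsub)
    have hz : (∫⁻ x in Bad i j, ENNReal.ofReal |(fderiv ℝ y x).det| ∂volume) = 0 := by
      rw [heq]
      exact measure_mono_null him (hTmnull i j hij)
    have := (setLIntegral_eq_zero_iff (hBadmeas i j) hgmeas).1 hz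
    rw [Filter.eventually_iff, mem_ae_iff] at this
    have hBB : Bad i j ⊆ {x | x ∈ Bad i j → ENNReal.ofReal |(fderiv ℝ y x).det| = 0}ᶜ := by
      intro x hx
      simp only [Set.mem_compl_iff, Set.mem_setOf_eq, not_forall]
      refine ⟨hx, ?_⟩
      have h0 : 0 < (fderiv ℝ y x).det := hdet x (hSΩ i (hsub hx))
      simp [abs_of_pos h0, ENNReal.ofReal_eq_zero, not_le, h0]
    exact measure_mono_null hBB this
  -- the null set
  set Z : Set (EuclideanSpace ℝ (Fin d)) := ⋃ i, ⋃ j, ⋃ (_ : i ≠ j), Bad i j with hZ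
  have hZnull : volume Z = 0 := by
    rw [hZ]
    refine measure_iUnion_null fun i => measure_iUnion_null fun j => measure_iUnion_null fun hij =>
      hBadnull i j hij
  refine ⟨toMeasurable volume Z ∩ Ω, Set.inter_subset_right,
    (measurableSet_toMeasurable _ _).inter hΩo.measurableSet, ?_, ?_⟩
  · exact measure_mono_null (Set.inter_subset_left.trans (Set.Subset.refl _))
      (by rw [measure_toMeasurable]; exact hZnull)
  · intro a ha b hb hab
    by_contra hne
    obtain ⟨haΩ, haN⟩ := ha
    obtain ⟨hbΩ, hbN⟩ := hb
    have haS : ∃ i, a ∈ S i := by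
      have : a ∈ ⋃ n, S n := hSU ▸ haΩ
      exact Set.mem_iUnion.1 this
    have hbS : ∃ j, b ∈ S j := by
      have : b ∈ ⋃ n, S n := hSU ▸ hbΩ
      exact Set.mem_iUnion.1 this
    obtain ⟨i, hi⟩ := haS
    obtain ⟨j, hj⟩ := hbS
    by_cases hij : i = j
    · subst hij
      exact hne (hSinj i hi hj hab)
    · have hmem : y a ∈ y '' S i ∩ y '' S j :=
        ⟨Set.mem_image_of_mem y hi, hab ▸ Set.mem_image_of_mem y hj⟩
      have haZ : a ∈ Z := by
        rw [hZ]
        refine Set.mem_iUnion.2 ⟨i, Set.mem_iUnion.2 ⟨j, Set.mem_iUnion.2 ⟨hij, ?_⟩⟩⟩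
        exact ⟨hi, subset_toMeasurable _ _ hmem⟩
      exact haN ⟨subset_toMeasurable _ _ haZ, haΩ⟩
end

section
/- Upper semicontinuity of the measure of the deformed configuration under uniform convergence: Let d ≥ 1 and let Ω ⊆ ℝ^d be a bounded open set with vol(∂Ω) = 0. Let y : ℝ^d → ℝ^d be Lipschitz continuous on closure(Ω), and let y_n : ℝ^d → ℝ^d (n ∈ ℕ) be functions with sup_{x ∈ closure(Ω)} |y_n(x) − y(x)| → 0 as n → ∞. Then limsup_{n→∞} vol(y_n(Ω)) ≤ vol(y(Ω)). -/
open MeasureTheory Filter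

/-- A Lipschitz-on-a-set map of `ℝ^d` sends null subsets of that set to null sets. -/
lemma lipschitzOnWith_image_null {d : ℕ} (hd : 1 ≤ d)
    {y : EuclideanSpace ℝ (Fin d) → EuclideanSpace ℝ (Fin d)} {K : NNReal}
    {s : Set (EuclideanSpace ℝ (Fin d))} (hy : LipschitzOnWith K y s)
    (hs : volume s = 0) : volume (y '' s) = 0 := by
  have : Nonempty (Fin d) := ⟨⟨0, hd⟩⟩
  set e := (MeasurableEquiv.toLp 2 (Fin d → ℝ)).symm with he_def
  have hvp := EuclideanSpace.volume_preserving_symm_measurableEquiv_toLp (Fin d)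
  -- `e` and `e.symm` are Lipschitz
  have he : LipschitzWith 1 (⇑e) := by
    exact PiLp.lipschitzWith_ofLp 2 _
  obtain ⟨c, hc⟩ : ∃ c : NNReal, LipschitzWith c (⇑e.symm) := by
    have h := PiLp.antilipschitzWith_ofLp 2 (fun _ : Fin d => ℝ)
    have hri : Function.RightInverse (⇑e.symm) (⇑e) := e.right_inv
    exact ⟨_, h.to_rightInverse hri⟩
  -- the conjugated map is Lipschitz on `e '' s`
  have hmaps : Set.MapsTo (⇑e.symm) (⇑e '' s) s := by
    rintro x ⟨a, ha, rfl⟩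
    simpa using ha
  have h1 : LipschitzOnWith (K * c) (y ∘ ⇑e.symm) (⇑e '' s) :=
    hy.comp hc.lipschitzOnWith hmaps
  have h2 : LipschitzOnWith (1 * (K * c)) (⇑e ∘ (y ∘ ⇑e.symm)) (⇑e '' s) :=
    he.comp_lipschitzOnWith h1
  -- measures of images under `e` agree with original measures
  have hmeas : ∀ t : Set (EuclideanSpace ℝ (Fin d)), volume (⇑e '' t) = volume t := by
    intro t
    rw [MeasurableEquiv.image_eq_preimage_symm]
    exact (MeasurePreserving.symm e hvp).measure_preimage_emb e.symm.measurableEmbedding t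
  -- Hausdorff measure estimate in the pi space
  have hH := h2.hausdorffMeasure_image_le (d := (d : ℝ)) (by positivity)
  have hpi : (μH[(d : ℝ)] : Measure (Fin d → ℝ)) = volume := by
    have := MeasureTheory.hausdorffMeasure_pi_real (ι := Fin d)
    simpa using this
  rw [hpi] at hH
  have hcomp : (⇑e ∘ (y ∘ ⇑e.symm)) ∘ ⇑e = ⇑e ∘ y := by
    funext x; simp
  have himg : (⇑e ∘ (y ∘ ⇑e.symm)) '' (⇑e '' s) = ⇑e '' (y '' s) := by
    rw [← Set.image_comp, hcomp, Set.image_comp]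
  rw [himg, hmeas, hmeas, hs, mul_zero] at hH
  exact le_antisymm hH (zero_le)

/-- Upper semicontinuity of the measure of the deformed configuration under uniform
convergence: if `Ω` is bounded open with `vol(∂Ω) = 0`, `y` is Lipschitz on `closure Ω`
and `yₙ → y` uniformly on `closure Ω`, then `limsup_n vol(yₙ(Ω)) ≤ vol(y(Ω))`. -/
theorem measure_image_upper_semicontinuous
    (d : ℕ) (hd : 1 ≤ d)
    (Ω : Set (EuclideanSpace ℝ (Fin d)))
    (hΩo : IsOpen Ω) (hΩb : Bornology.IsBounded Ω)
    (hbdry : volume (frontier Ω) = 0)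
    (y : EuclideanSpace ℝ (Fin d) → EuclideanSpace ℝ (Fin d))
    (K : NNReal) (hy : LipschitzOnWith K y (closure Ω))
    (yn : ℕ → EuclideanSpace ℝ (Fin d) → EuclideanSpace ℝ (Fin d))
    (hconv : TendstoUniformlyOn yn y atTop (closure Ω)) :
    limsup (fun n => volume (yn n '' Ω)) atTop ≤ volume (y '' Ω) := by
  set C : Set (EuclideanSpace ℝ (Fin d)) := y '' closure Ω with hC_def
  have hCcomp : IsCompact C := (hΩb.isCompact_closure).image_of_continuousOn hy.continuousOn
  -- Step 1: limsup is at most the measure of any thickening of C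
  have hstep1 : ∀ ε : ℝ, 0 < ε →
      limsup (fun n => volume (yn n '' Ω)) atTop ≤ volume (Metric.thickening ε C) := by
    intro ε hε
    have hev : ∀ᶠ n in atTop, ∀ x ∈ closure Ω, dist (y x) (yn n x) < ε :=
      (Metric.tendstoUniformlyOn_iff.1 hconv) ε hε
    have hsub : ∀ᶠ n in atTop, yn n '' Ω ⊆ Metric.thickening ε C := by
      filter_upwards [hev] with n hn
      rintro _ ⟨x, hx, rfl⟩
      rw [Metric.mem_thickening_iff]
      exact ⟨y x, ⟨x, subset_closure hx, rfl⟩, by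
        rw [dist_comm]; exact hn x (subset_closure hx)⟩
    refine limsup_le_of_le (by isBoundedDefault) ?_
    filter_upwards [hsub] with n hn
    exact measure_mono hn
  -- Step 2: the measure of thickenings tends to the measure of C
  have hfin : ∃ R > 0, volume (Metric.thickening R C) ≠ ⊤ := by
    refine ⟨1, one_pos, ?_⟩
    have h1 : Metric.thickening 1 C ⊆ Metric.cthickening 1 C :=
      Metric.thickening_subset_cthickening 1 C
    have h2 : IsCompact (Metric.cthickening 1 C) := hCcomp.cthickening
    exact ((measure_mono h1).trans_lt h2.measure_lt_top).ne
  have htend := tendsto_measure_thickening (μ := volume) hfin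
  rw [hCcomp.isClosed.closure_eq] at htend
  have hstep2 : limsup (fun n => volume (yn n '' Ω)) atTop ≤ volume C := by
    refine ge_of_tendsto htend ?_
    filter_upwards [self_mem_nhdsWithin] with δ hδ
    exact hstep1 δ hδ
  -- Step 3: volume C ≤ volume (y '' Ω) since the boundary image is null
  have hfr : volume (y '' frontier Ω) = 0 :=
    lipschitzOnWith_image_null hd (hy.mono frontier_subset_closure) hbdry
  have hCle : volume C ≤ volume (y '' Ω) := by
    have hcl : closure Ω = Ω ∪ frontier Ω := by
      rw [closure_eq_interior_union_frontier, hΩo.interior_eq]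
    calc volume C = volume (y '' Ω ∪ y '' frontier Ω) := by
            rw [hC_def, hcl, Set.image_union]
      _ ≤ volume (y '' Ω) + volume (y '' frontier Ω) := measure_union_le _ _
      _ = volume (y '' Ω) := by rw [hfr, add_zero]
  exact hstep2.trans hCle
end

section
/- Stability of the Ciarlet–Nečas condition under C¹ convergence: Let d ≥ 1 and let Ω ⊆ ℝ^d be a nonempty bounded open set with vol(∂Ω) = 0. Let U ⊇ closure(Ω) be open and let y, y_n : ℝ^d → ℝ^d (n ∈ ℕ) be continuously differentiable on U with sup_{x ∈ closure(Ω)} |y_n(x) − y(x)| → 0 and sup_{x ∈ closure(Ω)} ‖Dy_n(x) − Dy(x)‖ → 0 as n → ∞. If every y_n satisfies the Ciarlet–Nečas condition ∫_Ω det Dy_n(x) dx ≤ vol(y_n(Ω)), then y satisfies it as well: ∫_Ω det Dy(x) dx ≤ vol(y(Ω)). -/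
open MeasureTheory Filter
open scoped Topology

/-- Stability of the Ciarlet–Nečas condition under `C¹` convergence: let `Ω` be a
nonempty bounded open set with `vol(∂Ω) = 0`, let `y, yₙ` be `C¹` on an open
neighbourhood `U` of `closure Ω`, and assume `yₙ → y` and `Dyₙ → Dy` uniformly on
`closure Ω`. If every `yₙ` satisfies the Ciarlet–Nečas condition
`∫_Ω det Dyₙ ≤ vol (yₙ(Ω))`, then so does `y`. -/
theorem ciarlet_necas_stable_under_C1_convergence
    (d : ℕ) (hd : 1 ≤ d)
    (Ω U : Set (EuclideanSpace ℝ (Fin d)))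
    (hΩne : Ω.Nonempty) (hΩo : IsOpen Ω) (hΩb : Bornology.IsBounded Ω)
    (hbdry : volume (frontier Ω) = 0)
    (hUo : IsOpen U) (hU : closure Ω ⊆ U)
    (y : EuclideanSpace ℝ (Fin d) → EuclideanSpace ℝ (Fin d))
    (yn : ℕ → EuclideanSpace ℝ (Fin d) → EuclideanSpace ℝ (Fin d))
    (hy : ContDiffOn ℝ 1 y U) (hyn : ∀ n, ContDiffOn ℝ 1 (yn n) U)
    (hconv : TendstoUniformlyOn yn y atTop (closure Ω))
    (hconv' : TendstoUniformlyOn (fun n => fderiv ℝ (yn n)) (fderiv ℝ y) atTop (closure Ω))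
    (hCNn : ∀ n, ∫ x in Ω, (fderiv ℝ (yn n) x).det ≤ (volume (yn n '' Ω)).toReal) :
    ∫ x in Ω, (fderiv ℝ y x).det ≤ (volume (y '' Ω)).toReal := by
  classical
  set K := closure Ω with hKdef
  have hKc : IsCompact K := Metric.isCompact_of_isClosed_isBounded isClosed_closure hΩb.closure
  have hΩK : Ω ⊆ K := subset_closure
  -- continuity of y and its derivative on U
  have hyc : ContinuousOn y U := hy.continuousOn
  have hFc : ContinuousOn (fderiv ℝ y) U := hy.continuousOn_fderiv_of_isOpen hUo le_rfl
  have hFnc : ∀ n, ContinuousOn (fderiv ℝ (yn n)) U := fun n =>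
    (hyn n).continuousOn_fderiv_of_isOpen hUo le_rfl
  -- the image of the derivative on K and its 1-cthickening are compact
  have hS : IsCompact ((fderiv ℝ y) '' K) := hKc.image_of_continuousOn (hFc.mono hU)
  have hT : IsCompact (Metric.cthickening 1 ((fderiv ℝ y) '' K)) := hS.cthickening
  -- bound for determinants on the cthickening
  obtain ⟨C, hC⟩ := hT.exists_bound_of_continuousOn
    (ContinuousLinearMap.continuous_det.continuousOn)
  -- eventually all derivative values lie in the cthickening
  obtain ⟨N, hN⟩ : ∃ N, ∀ n ≥ N, ∀ x ∈ K, dist (fderiv ℝ y x) (fderiv ℝ (yn n) x) < 1 := by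
    have := (Metric.tendstoUniformlyOn_iff.mp hconv') 1 one_pos
    exact eventually_atTop.mp this
  have hmemT : ∀ n ≥ N, ∀ x ∈ K,
      fderiv ℝ (yn n) x ∈ Metric.cthickening 1 ((fderiv ℝ y) '' K) := by
    intro n hn x hx
    exact Metric.mem_cthickening_of_dist_le _ _ _ _ ⟨x, hx, rfl⟩
      (by rw [dist_comm]; exact (hN n hn x hx).le)
  have hΩfin : volume Ω ≠ ⊤ := hΩb.measure_lt_top.ne
  have hΩm : MeasurableSet Ω := hΩo.measurableSet
  -- convergence of the integrals of the determinants
  have hItendsto : Tendsto (fun n => ∫ x in Ω, (fderiv ℝ (yn n) x).det) atTop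
      (𝓝 (∫ x in Ω, (fderiv ℝ y x).det)) := by
    rw [← tendsto_add_atTop_iff_nat N]
    apply MeasureTheory.tendsto_integral_of_dominated_convergence (fun _ => C)
    · intro n
      exact ((ContinuousLinearMap.continuous_det.comp_continuousOn
        ((hFnc (n + N)).mono (hΩK.trans hU))).aestronglyMeasurable hΩm)
    · exact (integrableOn_const_iff).mpr (Or.inr hΩfin.lt_top)
    · intro n
      apply MeasureTheory.ae_restrict_of_forall_mem hΩm
      intro x hx
      exact hC _ (hmemT (n + N) (Nat.le_add_left N n) x (hΩK hx))
    · apply MeasureTheory.ae_restrict_of_forall_mem hΩm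
      intro x hx
      have h1 : Tendsto (fun n => fderiv ℝ (yn n) x) atTop (𝓝 (fderiv ℝ y x)) :=
        hconv'.tendsto_at (hΩK hx)
      have h2 : Tendsto (fun n => (fderiv ℝ (yn n) x).det) atTop (𝓝 (fderiv ℝ y x).det) :=
        ((ContinuousLinearMap.continuous_det.tendsto _).comp h1)
      exact h2.comp (tendsto_add_atTop_nat N)
  -- the image of K under y is compact
  have hKimg : IsCompact (y '' K) := hKc.image_of_continuousOn (hyc.mono hU)
  -- the image of the frontier is null
  have hnull : volume (y '' frontier Ω) = 0 := by
    have hfm : MeasurableSet (frontier Ω) := isClosed_frontier.measurableSet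
    have hder : ∀ x ∈ frontier Ω,
        HasFDerivWithinAt y (fderiv ℝ y x) (frontier Ω) x := by
      intro x hx
      have hxU : U ∈ nhds x := hUo.mem_nhds (hU (frontier_subset_closure hx))
      exact (((hy.differentiableOn one_ne_zero).differentiableAt hxU).hasFDerivAt).hasFDerivWithinAt
    have := MeasureTheory.addHaar_image_le_lintegral_abs_det_fderiv volume hfm hder
    rw [MeasureTheory.setLIntegral_measure_zero _ _ hbdry] at this
    exact le_antisymm this zero_le
  -- vol (y '' K) = vol (y '' Ω)
  have hKΩ : K = Ω ∪ frontier Ω := by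
    rw [hKdef, closure_eq_interior_union_frontier, hΩo.interior_eq]
  have hvolK : volume (y '' K) = volume (y '' Ω) := by
    apply le_antisymm
    · calc volume (y '' K) ≤ volume (y '' Ω ∪ y '' frontier Ω) := by
            rw [← Set.image_union, ← hKΩ]
          _ ≤ volume (y '' Ω) + volume (y '' frontier Ω) := measure_union_le _ _
          _ = volume (y '' Ω) := by rw [hnull, add_zero]
    · exact measure_mono (Set.image_mono hΩK)
  have hKimgfin : volume (y '' K) ≠ ⊤ := hKimg.measure_lt_top.ne
  -- key bound for each ε > 0
  have key : ∀ ε > (0:ℝ), ∫ x in Ω, (fderiv ℝ y x).det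
      ≤ (volume (Metric.thickening ε (y '' K))).toReal := by
    intro ε hε
    have hthfin : volume (Metric.thickening ε (y '' K)) ≠ ⊤ :=
      (hKimg.isBounded.thickening).measure_lt_top.ne
    have hev : ∀ᶠ n in atTop, ∫ x in Ω, (fderiv ℝ (yn n) x).det
        ≤ (volume (Metric.thickening ε (y '' K))).toReal := by
      filter_upwards [(Metric.tendstoUniformlyOn_iff.mp hconv) ε hε] with n hn
      have hsub : yn n '' Ω ⊆ Metric.thickening ε (y '' K) := by
        rintro _ ⟨x, hx, rfl⟩
        exact Metric.mem_thickening_iff.mpr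
          ⟨y x, ⟨x, hΩK hx, rfl⟩, by rw [dist_comm]; exact hn x (hΩK hx)⟩
      exact (hCNn n).trans (ENNReal.toReal_mono hthfin (measure_mono hsub))
    exact le_of_tendsto hItendsto hev
  -- pass to the limit ε → 0⁺
  have hthick : Tendsto (fun r => volume (Metric.thickening r (y '' K))) (𝓝[>] 0)
      (𝓝 (volume (y '' K))) :=
    tendsto_measure_thickening_of_isClosed
      ⟨1, one_pos, (hKimg.isBounded.thickening).measure_lt_top.ne⟩ hKimg.isClosed
  have hthickR : Tendsto (fun r => (volume (Metric.thickening r (y '' K))).toReal) (𝓝[>] 0)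
      (𝓝 (volume (y '' K)).toReal) :=
    (ENNReal.tendsto_toReal hKimgfin).comp hthick
  have final : ∫ x in Ω, (fderiv ℝ y x).det ≤ (volume (y '' K)).toReal := by
    apply ge_of_tendsto hthickR
    filter_upwards [self_mem_nhdsWithin] with ε hε
    exact key ε hε
  rwa [hvolK] at final
end
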